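/- Every complex number z with Re(z) < 0 belongs to R_MS^r for some natural number r; that is, the open left half-plane is contained in the union over r ∈ ℕ of the sets {z ∈ ℂ : ∫₀¹ |f_{r,z}(t)|² dt < 1}, where f_{r,z}(t) = Σ_{j=0}^{r+1} z^j/j! + t^{r+1} z^{r+2}/(r+1)!. -/

import Mathlib

open MeasureTheory Finset

noncomputable def fT (r : ℕ) (z : ℂ) (t : ℝ) : ℂ :=
  (∑ j ∈ Finset.range (r + 2), z ^ j / (j.factorial : ℂ)) +
    (t : ℂ) ^ (r + 1) * z ^ (r + 2) / ((r + 1).factorial : ℂ)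

noncomputable def Fms (r : ℕ) (z : ℂ) : ℝ :=
  ∫ t in (0:ℝ)..1, (‖fT r z t‖) ^ 2

noncomputable def Gas (r : ℕ) (z : ℂ) : ℝ :=
  ∫ t in (0:ℝ)..1, Real.log (‖fT r z t‖)

/-!
On `[0, 1]` the functions `fT r z` converge uniformly to the constant `exp z` as `r → ∞`: the
partial sums of the exponential series converge, and the extra term is at most
`‖z‖ ^ (r + 2) / (r + 1)!`. Hence for large `r` we have `‖fT r z t‖ ≤ c` on `[0, 1]` for any
fixed `c` with `‖exp z‖ = exp (re z) < c < 1`, and then `Fms r z ≤ c ^ 2 < 1`.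
-/

open Filter Topology Set

lemma tendsto_sum_range_pow_div_factorial (z : ℂ) :
    Tendsto (fun n ↦ ∑ j ∈ range n, z ^ j / (j.factorial : ℂ)) atTop (𝓝 (Complex.exp z)) := by
  rw [Complex.exp_eq_exp_ℂ]
  exact (NormedSpace.expSeries_div_hasSum_exp z).tendsto_sum_nat

lemma tendsto_pow_add_two_div_factorial (x : ℝ) :
    Tendsto (fun r : ℕ ↦ x ^ (r + 2) / (r + 1).factorial) atTop (𝓝 0) := by
  have h := ((FloorSemiring.tendsto_pow_div_factorial_atTop x).comp
    (tendsto_add_atTop_nat 1)).const_mul x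
  rw [mul_zero] at h
  refine h.congr fun r ↦ ?_
  simp only [Function.comp, pow_succ x (r + 1)]
  ring

lemma norm_fT_sub_exp_le (z : ℂ) (r : ℕ) {t : ℝ} (ht : t ∈ Icc (0 : ℝ) 1) :
    ‖fT r z t - Complex.exp z‖ ≤
      ‖∑ j ∈ range (r + 2), z ^ j / (j.factorial : ℂ) - Complex.exp z‖ +
        ‖z‖ ^ (r + 2) / (r + 1).factorial := by
  have ht1 : ‖(t : ℂ)‖ ≤ 1 := by
    rw [Complex.norm_real, Real.norm_of_nonneg ht.1]
    exact ht.2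
  have htail : ‖(t : ℂ) ^ (r + 1) * z ^ (r + 2) / ((r + 1).factorial : ℂ)‖ ≤
      ‖z‖ ^ (r + 2) / (r + 1).factorial := by
    rw [norm_div, norm_mul, norm_pow, norm_pow, Complex.norm_natCast]
    gcongr
    exact mul_le_of_le_one_left (by positivity) (pow_le_one₀ (norm_nonneg _) ht1)
  calc ‖fT r z t - Complex.exp z‖
      = ‖(∑ j ∈ range (r + 2), z ^ j / (j.factorial : ℂ) - Complex.exp z) +
          (t : ℂ) ^ (r + 1) * z ^ (r + 2) / ((r + 1).factorial : ℂ)‖ := by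
        rw [fT]
        ring_nf
    _ ≤ _ := (norm_add_le _ _).trans (by gcongr)

lemma eventually_forall_norm_fT_le (z : ℂ) {ε : ℝ} (hε : 0 < ε) :
    ∀ᶠ r in atTop, ∀ t ∈ Icc (0 : ℝ) 1, ‖fT r z t‖ ≤ ‖Complex.exp z‖ + ε := by
  have hbound : Tendsto (fun r : ℕ ↦
      ‖∑ j ∈ range (r + 2), z ^ j / (j.factorial : ℂ) - Complex.exp z‖ +
        ‖z‖ ^ (r + 2) / (r + 1).factorial) atTop (𝓝 0) := by
    have hsum := ((tendsto_sum_range_pow_div_factorial z).comp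
      (tendsto_add_atTop_nat 2)).sub_const (Complex.exp z)
    rw [sub_self] at hsum
    simpa using hsum.norm.add (tendsto_pow_add_two_div_factorial ‖z‖)
  filter_upwards [hbound.eventually (eventually_le_nhds hε)] with r hr t ht
  calc ‖fT r z t‖ ≤ ‖Complex.exp z‖ + ‖fT r z t - Complex.exp z‖ := norm_le_insert' _ _
    _ ≤ ‖Complex.exp z‖ + ε := by grw [norm_fT_sub_exp_le z r ht, hr]

lemma continuous_fT (r : ℕ) (z : ℂ) : Continuous (fT r z) := by
  unfold fT
  fun_prop

lemma Fms_le_sq_of_forall_norm_le {r : ℕ} {z : ℂ} {M : ℝ}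
    (h : ∀ t ∈ Icc (0 : ℝ) 1, ‖fT r z t‖ ≤ M) : Fms r z ≤ M ^ 2 := by
  have hint : IntervalIntegrable (fun t ↦ ‖fT r z t‖ ^ 2) volume 0 1 :=
    ((continuous_fT r z).norm.pow 2).intervalIntegrable 0 1
  calc Fms r z ≤ ∫ _ in (0 : ℝ)..1, M ^ 2 :=
        intervalIntegral.integral_mono_on zero_le_one hint intervalIntegrable_const
          fun t ht ↦ pow_le_pow_left₀ (norm_nonneg _) (h t ht) 2
    _ = M ^ 2 := by simp

theorem stmt14 (z : ℂ) (hz : z.re < 0) : ∃ r : ℕ, Fms r z < 1 := by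
  have hc : ‖Complex.exp z‖ < 1 := by rw [Complex.norm_exp]; exact Real.exp_lt_one_iff.mpr hz
  set c := ‖Complex.exp z‖
  have hc0 : 0 ≤ c := norm_nonneg _
  obtain ⟨r, hr⟩ := (eventually_forall_norm_fT_le z (ε := (1 - c) / 2) (by linarith)).exists
  refine ⟨r, (Fms_le_sq_of_forall_norm_le hr).trans_lt ?_⟩
  nlinarith
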